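/- Let n be even with n ≥ 2, N = 2^n, and let φ, ψ ∈ ℂ^N be unit vectors with φᵀ S φ = ψᵀ S ψ. Then there exists k ∈ SU(N) with kᵀ S k = S and k φ = ψ. In other words, the symmetry group K of the concurrence form acts transitively on the normalized states in each level set of the concurrence quadratic form ψ ↦ ψᵀSψ. -/

import Mathlib

/-!
Since `n` is even, `S` is a real symmetric involution, so `U = ((1 - i)/2)(1 + iS)` is a unitary
matrix with `Uᵀ U = S`. The substitution `x = U ψ` turns the concurrence form into the bilinear
form `xᵀ x`. For unit vectors `x`, `y` with `xᵀ x = yᵀ y` the pairs (real part, imaginary part)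
of `x` and of `y` have the same Gram matrix, so by Witt's theorem for `SO(N)` (which needs
`N ≥ 3`) a real rotation `O` maps `x` to `y`. Then `k = U⋆ O U` lies in `SU(N)`, preserves
`Uᵀ U = S`, and maps `φ` to `ψ`.
-/

open Matrix Complex

noncomputable section

/-- Number of ones in the binary expansion of `j`. -/
def popCnt (j : ℕ) : ℕ := (Nat.digits 2 j).sum

/-- The `N × N` matrix `S = (-iσ^y) ⊗ ⋯ ⊗ (-iσ^y)` (`n` factors), `N = 2^n`;
equivalently `S |j⟩ = (-1)^{#j} |N-1-j⟩`. -/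
def Smat (n : ℕ) : Matrix (Fin (2 ^ n)) (Fin (2 ^ n)) ℂ :=
  fun k j => if (k : ℕ) + (j : ℕ) = 2 ^ n - 1 then (-1 : ℂ) ^ popCnt (j : ℕ) else 0

/-- The standard entangler `E₀` (for `n` even):
`E₀ = (1/√2) Σ_{j<N/2} ( |j⟩⟨2j| + i|j⟩⟨2j+1| + (-1)^{#j}(|N-j-1⟩⟨2j| - i|N-j-1⟩⟨2j+1|) )`. -/
def E0 (n : ℕ) : Matrix (Fin (2 ^ n)) (Fin (2 ^ n)) ℂ :=
  fun r c =>
    (Real.sqrt 2 : ℂ)⁻¹ *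
      (if (r : ℕ) < 2 ^ n / 2 then
        (if (c : ℕ) = 2 * (r : ℕ) then 1
         else if (c : ℕ) = 2 * (r : ℕ) + 1 then Complex.I else 0)
      else
        (if (c : ℕ) = 2 * (2 ^ n - 1 - (r : ℕ)) then
            (-1 : ℂ) ^ popCnt (2 ^ n - 1 - (r : ℕ))
         else if (c : ℕ) = 2 * (2 ^ n - 1 - (r : ℕ)) + 1 then
            -Complex.I * (-1 : ℂ) ^ popCnt (2 ^ n - 1 - (r : ℕ))
         else 0))

/-- `Σ = Σ_{j<N/2} ( |j⟩⟨N/2+j| - |N/2+j⟩⟨j| )`. -/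
def SigmaMat (n : ℕ) : Matrix (Fin (2 ^ n)) (Fin (2 ^ n)) ℂ :=
  fun r c =>
    if (c : ℕ) = (r : ℕ) + 2 ^ n / 2 then 1
    else if (r : ℕ) = (c : ℕ) + 2 ^ n / 2 then -1 else 0

/-- The standard finagler `F₀` (for `n` odd):
`F₀ = (1/√2) Σ_{j<N/2} ( |j⟩⟨j| + |N-j-1⟩⟨j| + (-1)^{#j}(|j⟩⟨N/2+j| - |N-j-1⟩⟨N/2+j|) )`. -/
def F0 (n : ℕ) : Matrix (Fin (2 ^ n)) (Fin (2 ^ n)) ℂ :=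
  fun r c =>
    (Real.sqrt 2 : ℂ)⁻¹ *
      (if (r : ℕ) < 2 ^ n / 2 then
        (if (c : ℕ) = (r : ℕ) then 1
         else if (c : ℕ) = (r : ℕ) + 2 ^ n / 2 then (-1 : ℂ) ^ popCnt (r : ℕ) else 0)
      else
        (if (c : ℕ) = 2 ^ n - 1 - (r : ℕ) then 1
         else if (c : ℕ) = (2 ^ n - 1 - (r : ℕ)) + 2 ^ n / 2 then
            -(-1 : ℂ) ^ popCnt (2 ^ n - 1 - (r : ℕ))
         else 0))

/-- The concurrence capacity `κ(v) = sup { |(vψ)ᵀ S (vψ)| : ‖ψ‖ = 1, ψᵀSψ = 0 }`. -/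
def kappa (n : ℕ) (v : Matrix (Fin (2 ^ n)) (Fin (2 ^ n)) ℂ) : ℝ :=
  sSup { r : ℝ | ∃ ψ : Fin (2 ^ n) → ℂ,
    star ψ ⬝ᵥ ψ = 1 ∧ ψ ⬝ᵥ ((Smat n) *ᵥ ψ) = 0 ∧
    r = ‖(v *ᵥ ψ) ⬝ᵥ ((Smat n) *ᵥ (v *ᵥ ψ))‖ }


lemma Matrix.mulVec_dotProduct_mulVec {ι R : Type*} [Fintype ι] [CommSemiring R]
    (M : Matrix ι ι R) (x y : ι → R) : (M *ᵥ x) ⬝ᵥ (M *ᵥ y) = x ⬝ᵥ (Mᵀ * M) *ᵥ y := by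
  rw [dotProduct_comm, dotProduct_mulVec, ← mulVec_transpose, dotProduct_comm, mulVec_mulVec]

lemma Matrix.star_mulVec_dotProduct_mulVec {ι R : Type*} [Fintype ι] [CommSemiring R]
    [StarRing R] (M : Matrix ι ι R) (x y : ι → R) :
    star (M *ᵥ x) ⬝ᵥ (M *ᵥ y) = star x ⬝ᵥ (star M * M) *ᵥ y := by
  rw [star_mulVec, ← dotProduct_mulVec, mulVec_mulVec, star_eq_conjTranspose]

section Householder

variable {ι K : Type*} [Fintype ι] [DecidableEq ι] [Field K]

/-- For `u ⬝ᵥ u = 0` this is `1`, since `2 / 0 = 0`. -/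
def householder (u : ι → K) : Matrix ι ι K :=
  1 - (2 / (u ⬝ᵥ u)) • vecMulVec u u

lemma householder_transpose (u : ι → K) : (householder u)ᵀ = householder u := by
  simp [householder, transpose_vecMulVec]

lemma householder_mulVec (u x : ι → K) :
    householder u *ᵥ x = x - (2 / (u ⬝ᵥ u) * (u ⬝ᵥ x)) • u := by
  simp [householder, sub_mulVec, smul_mulVec, vecMulVec_mulVec, smul_smul]

lemma householder_mulVec_of_dotProduct_eq_zero {u x : ι → K} (h : u ⬝ᵥ x = 0) :
    householder u *ᵥ x = x := by
  simp [householder_mulVec, h]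

lemma householder_mul_self {u : ι → K} (hu : u ⬝ᵥ u ≠ 0) : householder u * householder u = 1 := by
  refine Matrix.toLin'.injective (LinearMap.ext fun x => ?_)
  simp only [toLin'_apply, ← mulVec_mulVec, householder_mulVec, dotProduct_sub, dotProduct_smul,
    smul_eq_mul]
  have hcoeff : 2 / (u ⬝ᵥ u) * (u ⬝ᵥ x)
      + 2 / (u ⬝ᵥ u) * (u ⬝ᵥ x - 2 / (u ⬝ᵥ u) * (u ⬝ᵥ x) * (u ⬝ᵥ u)) = 0 := by
    field_simp
    ring
  rw [one_mulVec, sub_sub, ← add_smul, hcoeff, zero_smul, sub_zero]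

lemma householder_det {u : ι → K} (hu : u ⬝ᵥ u ≠ 0) : (householder u).det = -1 := by
  have : householder u = 1 + vecMulVec (-(2 / (u ⬝ᵥ u)) • u) u := by
    rw [householder, smul_vecMulVec, neg_smul, ← sub_eq_add_neg]
  rw [this, vecMulVec_eq (Fin 1), det_one_add_replicateCol_mul_replicateRow, dotProduct_smul,
    smul_eq_mul]
  field_simp
  norm_num

lemma householder_sub_mulVec_self {u v : ι → K} (huv : u ⬝ᵥ u = v ⬝ᵥ v)
    (h : (u - v) ⬝ᵥ (u - v) ≠ 0) : householder (u - v) *ᵥ u = v := by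
  have hsub : (u - v) ⬝ᵥ (u - v) = 2 * ((u - v) ⬝ᵥ u) := by
    simp only [sub_dotProduct, dotProduct_sub, dotProduct_comm v u, huv]
    ring
  rw [hsub] at h
  rw [householder_mulVec, hsub, div_mul_eq_mul_div, div_self h, one_smul]
  abel

end Householder

lemma exists_ne_zero_dotProduct_eq_zero_and_dotProduct_eq_zero {ι K : Type*} [Fintype ι]
    [Field K] (hι : 3 ≤ Fintype.card ι) (c d : ι → K) :
    ∃ e : ι → K, e ≠ 0 ∧ e ⬝ᵥ c = 0 ∧ e ⬝ᵥ d = 0 := by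
  have hker : LinearMap.ker (Matrix.of ![c, d]).mulVecLin ≠ ⊥ :=
    LinearMap.ker_ne_bot_of_finrank_lt (by simp; omega)
  obtain ⟨e, he, hne⟩ := Submodule.exists_mem_ne_zero_of_ne_bot hker
  have hM := congrFun (LinearMap.mem_ker.mp he)
  exact ⟨e, hne, by simpa [dotProduct_comm] using hM 0, by simpa [dotProduct_comm] using hM 1⟩

section Witt

variable {ι : Type*} [Fintype ι] [DecidableEq ι]

lemma exists_orthogonal_mulVec_eq {a c : ι → ℝ} (h : a ⬝ᵥ a = c ⬝ᵥ c) :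
    ∃ O : Matrix ι ι ℝ, Oᵀ * O = 1 ∧ O *ᵥ a = c ∧ ∀ w, a ⬝ᵥ w = c ⬝ᵥ w → O *ᵥ w = w := by
  by_cases hac : a = c
  · exact ⟨1, by simp, by simp [hac], by simp⟩
  have hne : (a - c) ⬝ᵥ (a - c) ≠ 0 := by
    rwa [Ne, dotProduct_self_eq_zero, sub_eq_zero]
  refine ⟨householder (a - c), ?_, householder_sub_mulVec_self h hne, fun w hw => ?_⟩
  · rw [householder_transpose, householder_mul_self hne]
  · exact householder_mulVec_of_dotProduct_eq_zero (by rw [sub_dotProduct, hw, sub_self])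

lemma exists_orthogonal_mulVec_eq_of_gram_eq {a b c d : ι → ℝ} (haa : a ⬝ᵥ a = c ⬝ᵥ c)
    (hbb : b ⬝ᵥ b = d ⬝ᵥ d) (hab : a ⬝ᵥ b = c ⬝ᵥ d) :
    ∃ O : Matrix ι ι ℝ, Oᵀ * O = 1 ∧ O *ᵥ a = c ∧ O *ᵥ b = d := by
  obtain ⟨O₁, hO₁, hO₁a, -⟩ := exists_orthogonal_mulVec_eq haa
  have hb₁ : (O₁ *ᵥ b) ⬝ᵥ (O₁ *ᵥ b) = d ⬝ᵥ d := by
    rw [mulVec_dotProduct_mulVec, hO₁, one_mulVec, hbb]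
  obtain ⟨O₂, hO₂, hO₂b, hO₂fix⟩ := exists_orthogonal_mulVec_eq hb₁
  have hO₂c : O₂ *ᵥ c = c := hO₂fix c <| by
    rw [← hO₁a, mulVec_dotProduct_mulVec, hO₁, one_mulVec, dotProduct_comm, hab, hO₁a,
      dotProduct_comm]
  refine ⟨O₂ * O₁, ?_, ?_, ?_⟩
  · rw [transpose_mul, Matrix.mul_assoc, ← Matrix.mul_assoc O₂ᵀ, hO₂, Matrix.one_mul, hO₁]
  · rw [← mulVec_mulVec, hO₁a, hO₂c]
  · rw [← mulVec_mulVec, hO₂b]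

/-- Witt's theorem for `SO(ι)`: a reflection fixing `c` and `d` corrects the determinant. -/
lemma exists_specialOrthogonal_mulVec_eq_of_gram_eq (hι : 3 ≤ Fintype.card ι)
    {a b c d : ι → ℝ} (haa : a ⬝ᵥ a = c ⬝ᵥ c) (hbb : b ⬝ᵥ b = d ⬝ᵥ d) (hab : a ⬝ᵥ b = c ⬝ᵥ d) :
    ∃ O : Matrix ι ι ℝ, Oᵀ * O = 1 ∧ O.det = 1 ∧ O *ᵥ a = c ∧ O *ᵥ b = d := by
  obtain ⟨O, hO, hOa, hOb⟩ := exists_orthogonal_mulVec_eq_of_gram_eq haa hbb hab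
  have hdet : O.det * O.det = 1 := by
    simpa [det_mul, det_transpose] using congrArg det hO
  rcases mul_self_eq_one_iff.mp hdet with hdet | hdet
  · exact ⟨O, hO, hdet, hOa, hOb⟩
  obtain ⟨e, hne, hec, hed⟩ := exists_ne_zero_dotProduct_eq_zero_and_dotProduct_eq_zero hι c d
  have hee : e ⬝ᵥ e ≠ 0 := by rwa [Ne, dotProduct_self_eq_zero]
  refine ⟨householder e * O, ?_, ?_, ?_, ?_⟩
  · rw [transpose_mul, Matrix.mul_assoc, ← Matrix.mul_assoc (householder e)ᵀ,
      householder_transpose, householder_mul_self hee, Matrix.one_mul, hO]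
  · rw [det_mul, householder_det hee, hdet]
    norm_num
  · rw [← mulVec_mulVec, hOa, householder_mulVec_of_dotProduct_eq_zero hec]
  · rw [← mulVec_mulVec, hOb, householder_mulVec_of_dotProduct_eq_zero hed]

end Witt

section RealStructure

variable {ι : Type*} [Fintype ι]

lemma re_dotProduct_self (x : ι → ℂ) :
    (x ⬝ᵥ x).re = (re ∘ x) ⬝ᵥ (re ∘ x) - (im ∘ x) ⬝ᵥ (im ∘ x) := by
  simp only [dotProduct, re_sum, mul_re, Function.comp_apply, Finset.sum_sub_distrib]

lemma im_dotProduct_self (x : ι → ℂ) : (x ⬝ᵥ x).im = 2 * ((re ∘ x) ⬝ᵥ (im ∘ x)) := by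
  simp only [dotProduct, im_sum, mul_im, Function.comp_apply, Finset.mul_sum]
  exact Finset.sum_congr rfl fun i _ => by ring

lemma re_star_dotProduct_self (x : ι → ℂ) :
    (star x ⬝ᵥ x).re = (re ∘ x) ⬝ᵥ (re ∘ x) + (im ∘ x) ⬝ᵥ (im ∘ x) := by
  simp only [dotProduct, re_sum, Pi.star_apply, star_def, mul_re, conj_re, conj_im,
    Function.comp_apply, ← Finset.sum_add_distrib]
  exact Finset.sum_congr rfl fun i _ => by ring

lemma re_map_ofReal_mulVec (O : Matrix ι ι ℝ) (x : ι → ℂ) :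
    re ∘ (O.map ofRealHom *ᵥ x) = O *ᵥ (re ∘ x) := by
  ext i
  simp [mulVec, dotProduct, re_sum]

lemma im_map_ofReal_mulVec (O : Matrix ι ι ℝ) (x : ι → ℂ) :
    im ∘ (O.map ofRealHom *ᵥ x) = O *ᵥ (im ∘ x) := by
  ext i
  simp [mulVec, dotProduct, im_sum]

/-- `star x ⬝ᵥ x` and `x ⬝ᵥ x` determine the Gram matrix of `re ∘ x` and `im ∘ x`, so Witt's
theorem applies to these real vectors. -/
theorem exists_specialOrthogonal_map_mulVec_eq [DecidableEq ι] (hι : 3 ≤ Fintype.card ι)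
    {x y : ι → ℂ} (hxy : star x ⬝ᵥ x = star y ⬝ᵥ y) (hq : x ⬝ᵥ x = y ⬝ᵥ y) :
    ∃ O : Matrix ι ι ℝ, Oᵀ * O = 1 ∧ O.det = 1 ∧ O.map ofRealHom *ᵥ x = y := by
  have hsum := congrArg re hxy
  have hdiff := congrArg re hq
  have hcross := congrArg im hq
  rw [re_star_dotProduct_self, re_star_dotProduct_self] at hsum
  rw [re_dotProduct_self, re_dotProduct_self] at hdiff
  rw [im_dotProduct_self, im_dotProduct_self] at hcross
  obtain ⟨O, hO, hdet, hre, him⟩ := exists_specialOrthogonal_mulVec_eq_of_gram_eq hι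
    (a := re ∘ x) (b := im ∘ x) (c := re ∘ y) (d := im ∘ y)
    (by linarith) (by linarith) (by linarith)
  refine ⟨O, hO, hdet, funext fun i => Complex.ext ?_ ?_⟩
  · exact congrFun ((re_map_ofReal_mulVec O x).trans hre) i
  · exact congrFun ((im_map_ofReal_mulVec O x).trans him) i

lemma map_ofReal_mem_specialUnitaryGroup [DecidableEq ι] {O : Matrix ι ι ℝ} (hO : Oᵀ * O = 1)
    (hdet : O.det = 1) : O.map ofRealHom ∈ specialUnitaryGroup ι ℂ := by
  refine mem_specialUnitaryGroup_iff.mpr ⟨mem_unitaryGroup_iff'.mpr ?_, ?_⟩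
  · have hstar : star (O.map ofRealHom) = Oᵀ.map ofRealHom := by
      ext
      simp
    rw [hstar, ← Matrix.map_mul, hO, Matrix.map_one _ (map_zero _) (_root_.map_one _)]
  · simpa [hdet] using (RingHom.map_det ofRealHom O).symm

lemma transpose_map_ofReal_mul_self [DecidableEq ι] {O : Matrix ι ι ℝ} (hO : Oᵀ * O = 1) :
    (O.map ofRealHom)ᵀ * O.map ofRealHom = 1 := by
  rw [← transpose_map, ← Matrix.map_mul, hO, Matrix.map_one _ (map_zero _) (_root_.map_one _)]

end RealStructure

section Conjugation

variable {ι R : Type*} [Fintype ι] [DecidableEq ι] [CommRing R] [StarRing R]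
  {U O : Matrix ι ι R}

lemma star_mul_mul_mem_specialUnitaryGroup (hU : U ∈ unitaryGroup ι R)
    (hO : O ∈ specialUnitaryGroup ι R) : star U * O * U ∈ specialUnitaryGroup ι R := by
  obtain ⟨hOu, hOdet⟩ := mem_specialUnitaryGroup_iff.mp hO
  refine mem_specialUnitaryGroup_iff.mpr ⟨mul_mem (mul_mem (Unitary.star_mem hU) hOu) hU, ?_⟩
  rw [det_mul, det_mul, hOdet, mul_one, ← det_mul, mem_unitaryGroup_iff'.mp hU, det_one]

lemma transpose_mul_mul_star_mul_mul (hU : U ∈ unitaryGroup ι R) (hO : Oᵀ * O = 1) :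
    (star U * O * U)ᵀ * (Uᵀ * U) * (star U * O * U) = Uᵀ * U := by
  have hUt : (star U)ᵀ * Uᵀ = 1 := by
    rw [← transpose_mul, mem_unitaryGroup_iff.mp hU, transpose_one]
  calc (star U * O * U)ᵀ * (Uᵀ * U) * (star U * O * U)
      = Uᵀ * Oᵀ * ((star U)ᵀ * Uᵀ) * (U * star U) * O * U := by
        simp only [transpose_mul, Matrix.mul_assoc]
    _ = Uᵀ * (Oᵀ * O) * U := by
        rw [hUt, mem_unitaryGroup_iff.mp hU]
        simp only [Matrix.mul_one, Matrix.mul_assoc]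
    _ = Uᵀ * U := by rw [hO, Matrix.mul_one]

end Conjugation

section SqrtInvolution

variable {ι : Type*} [Fintype ι] [DecidableEq ι] {S : Matrix ι ι ℂ}

/-- For a real symmetric involution `S` this is a symmetric unitary square root of `S`, i.e. a
factorization `S = Uᵀ * U`. -/
def sqrtInvolution (S : Matrix ι ι ℂ) : Matrix ι ι ℂ :=
  ((1 - I) / 2) • (1 + I • S)

lemma sqrtInvolution_mem_unitaryGroup (hS : Sᴴ = S) (hSS : S * S = 1) :
    sqrtInvolution S ∈ unitaryGroup ι ℂ := by
  have hstar : star (sqrtInvolution S) = ((1 + I) / 2) • (1 - I • S) := by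
    rw [sqrtInvolution, star_smul, star_add, star_one, star_smul, star_eq_conjTranspose, hS]
    simp only [star_def, map_div₀, map_sub, map_one, conj_I, map_ofNat]
    module
  have hprod : (1 - I • S) * (1 + I • S) = (2 : ℂ) • 1 := by
    simp only [sub_mul, mul_add, Matrix.one_mul, Matrix.mul_one, smul_mul_smul_comm, hSS, I_mul_I]
    module
  have hscalar : (1 + I) / 2 * ((1 - I) / 2) * 2 = 1 := by
    linear_combination (-1 / 2 : ℂ) * I_sq
  rw [mem_unitaryGroup_iff', hstar, sqrtInvolution, smul_mul_smul_comm, hprod, smul_smul, hscalar,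
    one_smul]

lemma transpose_sqrtInvolution_mul_self (hS : Sᵀ = S) (hSS : S * S = 1) :
    (sqrtInvolution S)ᵀ * sqrtInvolution S = S := by
  have hprod : (1 + I • S) * (1 + I • S) = (2 * I) • S := by
    simp only [add_mul, mul_add, Matrix.one_mul, Matrix.mul_one, smul_mul_smul_comm, hSS, I_mul_I]
    module
  have hscalar : (1 - I) / 2 * ((1 - I) / 2) * (2 * I) = 1 := by
    linear_combination ((2 * I - 4) / 4) * I_sq
  rw [sqrtInvolution, transpose_smul, transpose_add, transpose_one, transpose_smul, hS,
    smul_mul_smul_comm, hprod, smul_smul, hscalar, one_smul]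

end SqrtInvolution

lemma popCnt_eq (j : ℕ) : popCnt j = j % 2 + popCnt (j / 2) := by
  rcases Nat.eq_zero_or_pos j with rfl | hj
  · simp [popCnt]
  · rw [popCnt, Nat.digits_def' (by norm_num) hj, List.sum_cons, popCnt]

lemma popCnt_add_popCnt_of_add_eq {n j k : ℕ} (h : j + k = 2 ^ n - 1) :
    popCnt j + popCnt k = n := by
  induction n generalizing j k with
  | zero =>
    obtain ⟨rfl, rfl⟩ : j = 0 ∧ k = 0 := by simp at h; omega
    simp [popCnt]
  | succ n ih =>
    rw [pow_succ] at h
    have hpos : 1 ≤ 2 ^ n := Nat.one_le_two_pow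
    have hhalf := ih (j := j / 2) (k := k / 2) (by omega)
    rw [popCnt_eq j, popCnt_eq k]
    omega

lemma Smat_apply (n : ℕ) (k j : Fin (2 ^ n)) :
    Smat n k j = if j = k.rev then (-1) ^ popCnt j else 0 := by
  have hrev : (k : ℕ) + j = 2 ^ n - 1 ↔ j = k.rev := by
    rw [Fin.ext_iff, Fin.val_rev]
    omega
  simp only [Smat, hrev]

lemma neg_one_pow_popCnt_rev {n : ℕ} (hev : Even n) (k : Fin (2 ^ n)) :
    (-1 : ℂ) ^ popCnt k.rev = (-1) ^ popCnt k := by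
  have hsum : popCnt k + popCnt k.rev = n :=
    popCnt_add_popCnt_of_add_eq (by rw [Fin.val_rev]; omega)
  rw [neg_one_pow_eq_pow_mod_two, neg_one_pow_eq_pow_mod_two (n := popCnt k)]
  obtain ⟨m, rfl⟩ := hev
  congr 1
  omega

lemma Smat_transpose {n : ℕ} (hev : Even n) : (Smat n)ᵀ = Smat n := by
  ext k j
  rw [transpose_apply, Smat_apply, Smat_apply]
  by_cases h : j = k.rev
  · rw [if_pos (Fin.rev_eq_iff.mp h.symm), if_pos h, h, neg_one_pow_popCnt_rev hev]
  · rw [if_neg (fun h' => h (Fin.rev_eq_iff.mp h'.symm)), if_neg h]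

lemma Smat_conjTranspose {n : ℕ} (hev : Even n) : (Smat n)ᴴ = Smat n := by
  have hreal : (Smat n).map star = Smat n := by
    ext k j
    rw [map_apply, Smat_apply]
    split_ifs <;> simp
  rw [conjTranspose, transpose_map, hreal, Smat_transpose hev]

lemma Smat_mul_self {n : ℕ} (hev : Even n) : Smat n * Smat n = 1 := by
  ext k j
  simp only [mul_apply, Smat_apply, ite_mul, zero_mul, Finset.sum_ite_eq', Finset.mem_univ,
    if_true, Fin.rev_rev, one_apply]
  by_cases h : j = k
  · rw [if_pos h, if_pos h.symm, h, ← pow_add, add_comm, popCnt_add_popCnt_of_add_eq (n := n)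
      (by rw [Fin.val_rev]; omega), hev.neg_one_pow]
  · rw [if_neg h, if_neg (Ne.symm h), mul_zero]

/-- **`K` acts transitively on the normalized states in each level set of the
concurrence quadratic form** (for `n` even, `n ≥ 2`): if `φ, ψ` are unit vectors with
`φᵀSφ = ψᵀSψ`, then there is `k ∈ SU(N)` with `kᵀ S k = S` and `k φ = ψ`. -/
theorem K_transitive_on_concurrence_level_sets (n : ℕ) (hn : 2 ≤ n) (hev : Even n)
    (φ ψ : Fin (2 ^ n) → ℂ)
    (hφ : star φ ⬝ᵥ φ = 1) (hψ : star ψ ⬝ᵥ ψ = 1)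
    (hQ : φ ⬝ᵥ ((Smat n) *ᵥ φ) = ψ ⬝ᵥ ((Smat n) *ᵥ ψ)) :
    ∃ k : Matrix (Fin (2 ^ n)) (Fin (2 ^ n)) ℂ,
      k ∈ Matrix.unitaryGroup (Fin (2 ^ n)) ℂ ∧ k.det = 1 ∧
      kᵀ * Smat n * k = Smat n ∧ k *ᵥ φ = ψ := by
  set U := sqrtInvolution (Smat n)
  have hU : U ∈ unitaryGroup _ ℂ :=
    sqrtInvolution_mem_unitaryGroup (Smat_conjTranspose hev) (Smat_mul_self hev)
  have hUU : star U * U = 1 := mem_unitaryGroup_iff'.mp hU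
  have hUS : Uᵀ * U = Smat n :=
    transpose_sqrtInvolution_mul_self (Smat_transpose hev) (Smat_mul_self hev)
  have hcard : 3 ≤ Fintype.card (Fin (2 ^ n)) := by
    rw [Fintype.card_fin]
    calc 3 ≤ 2 ^ 2 := by norm_num
      _ ≤ 2 ^ n := Nat.pow_le_pow_right two_pos hn
  obtain ⟨O, hO, hdet, hOUφ⟩ := exists_specialOrthogonal_map_mulVec_eq hcard
    (x := U *ᵥ φ) (y := U *ᵥ ψ)
    (by rw [star_mulVec_dotProduct_mulVec, star_mulVec_dotProduct_mulVec, hUU, one_mulVec,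
      one_mulVec, hφ, hψ])
    (by rw [mulVec_dotProduct_mulVec, mulVec_dotProduct_mulVec, hUS, hQ])
  obtain ⟨hk, hkdet⟩ := mem_specialUnitaryGroup_iff.mp <|
    star_mul_mul_mem_specialUnitaryGroup hU (map_ofReal_mem_specialUnitaryGroup hO hdet)
  refine ⟨star U * O.map ofRealHom * U, hk, hkdet, ?_, ?_⟩
  · simpa only [hUS] using transpose_mul_mul_star_mul_mul hU (transpose_map_ofReal_mul_self hO)
  · rw [← mulVec_mulVec, ← mulVec_mulVec, hOUφ, mulVec_mulVec, hUU, one_mulVec]
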